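/- If the slack variable in the QP satisfies w_i* ≤ 0 at all times for all i and each drone applies u_i* satisfying ξ₁ᵢᵀu_i* + ξ₂ᵢ ≥ w_i* (equivalently ḃ_{i,I} + a₁ b_{i,I} ≥ w_i*), and b_{i,I}(0) ≥ 0, then b_{i,I}(t) ≥ (b_{i,I}(0) + c) e^{-a₁ t} - c for any c with w_i* ≥ -a₁ c; in particular if w_i* = 0 always then I_i(t) ≥ γ/n whenever I_i(0) ≥ γ/n, and hence J̇(t) ≤ -γ. -/

import Mathlib

/-!
Multiplying by the integrating factor `exp (a₁ t)` turns `ḃ + a₁ b ≥ -a₁ c` into the statement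
that `exp (a₁ t) (b t + c)` is nondecreasing, which is the claimed comparison bound. With
`w ≡ 0` one may take `c = 0`, so `b` stays nonnegative, i.e. `I i t ≥ γ / n`; summing over the
`n` agents gives `∑ i, I i t ≥ γ`.
-/

open Real Set

theorem monotoneOn_exp_mul_of_deriv_add_mul_nonneg {f f' : ℝ → ℝ} {a : ℝ}
    (hf : ∀ t, HasDerivAt f (f' t) t) (h : ∀ t, 0 ≤ t → 0 ≤ f' t + a * f t) :
    MonotoneOn (fun t => exp (a * t) * f t) (Ici 0) := by
  have hderiv : ∀ t, HasDerivAt (fun t => exp (a * t) * f t)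
      (exp (a * t) * (f' t + a * f t)) t := fun t =>
    ((((hasDerivAt_id' t).const_mul a).exp).fun_mul (hf t)).congr_deriv (by ring)
  refine monotoneOn_of_hasDerivWithinAt_nonneg (convex_Ici 0)
    (fun t _ => (hderiv t).continuousAt.continuousWithinAt)
    (fun t _ => (hderiv t).hasDerivWithinAt) fun t ht => ?_
  rw [interior_Ici] at ht
  exact mul_nonneg (exp_pos _).le (h t (le_of_lt ht))

theorem mul_exp_neg_le_of_deriv_add_mul_nonneg {f f' : ℝ → ℝ} {a : ℝ}
    (hf : ∀ t, HasDerivAt f (f' t) t) (h : ∀ t, 0 ≤ t → 0 ≤ f' t + a * f t)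
    {t : ℝ} (ht : 0 ≤ t) :
    f 0 * exp (-a * t) ≤ f t := by
  have hmono := monotoneOn_exp_mul_of_deriv_add_mul_nonneg hf h self_mem_Ici ht ht
  simp only [mul_zero, exp_zero, one_mul] at hmono
  rw [neg_mul, exp_neg, ← div_eq_mul_inv, div_le_iff₀ (exp_pos _)]
  linarith

theorem stmt18_general (n : ℕ) (hn : 0 < n) (γ a₁ : ℝ)
    (I : Fin n → ℝ → ℝ) (b b' : Fin n → ℝ → ℝ) (w : Fin n → ℝ → ℝ)
    (hbdef : ∀ i t, b i t = I i t - γ / n)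
    (hder : ∀ i, ∀ t : ℝ, HasDerivAt (b i) (b' i t) t)
    (hcl : ∀ i, ∀ t : ℝ, 0 ≤ t → b' i t + a₁ * b i t ≥ w i t)
    (hinit : ∀ i, 0 ≤ b i 0) :
    (∀ i, ∀ c : ℝ, (∀ t : ℝ, 0 ≤ t → w i t ≥ -(a₁ * c)) →
        ∀ t : ℝ, 0 ≤ t → b i t ≥ (b i 0 + c) * Real.exp (-a₁ * t) - c) ∧
      ((∀ i, ∀ t : ℝ, 0 ≤ t → w i t = 0) →
        ∀ t : ℝ, 0 ≤ t → (∀ i, I i t ≥ γ / n) ∧ -(∑ i : Fin n, I i t) ≤ -γ) := by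
  have hbound : ∀ i, ∀ c : ℝ, (∀ t : ℝ, 0 ≤ t → w i t ≥ -(a₁ * c)) →
      ∀ t : ℝ, 0 ≤ t → b i t ≥ (b i 0 + c) * exp (-a₁ * t) - c := by
    intro i c hwc t ht
    have := mul_exp_neg_le_of_deriv_add_mul_nonneg (f := fun s => b i s + c) (a := a₁)
      (fun s => (hder i s).add_const c)
      (fun s hs => by linarith [hwc s hs, hcl i s hs]) ht
    linarith
  refine ⟨hbound, fun hw0 t ht => ?_⟩
  have hI : ∀ i, I i t ≥ γ / n := fun i => by
    have hb := hbound i 0 (fun s hs => by simp [hw0 i s hs]) t ht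
    have := mul_nonneg (hinit i) (exp_pos (-a₁ * t)).le
    linarith [hbdef i t]
  have hsum : γ ≤ ∑ i, I i t :=
    calc γ = ∑ _i : Fin n, γ / n := by
          rw [Finset.sum_const, Finset.card_univ, Fintype.card_fin, nsmul_eq_mul]
          field_simp
      _ ≤ ∑ i, I i t := Finset.sum_le_sum fun i _ => hI i
  exact ⟨hI, neg_le_neg hsum⟩

/-- If each b_i = I_i - γ/n is C¹ with closed-loop constraint
ḃ_i + a₁ b_i ≥ w_i, w_i ≤ 0, b_i(0) ≥ 0, then b_i(t) ≥ (b_i(0)+c)e^{-a₁t} - c for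
any c with w_i ≥ -a₁ c; in particular if w_i ≡ 0 then I_i(t) ≥ γ/n for all t ≥ 0
and hence J̇(t) = -Σ_i I_i(t) ≤ -γ. -/
theorem stmt18 (n : ℕ) (hn : 0 < n) (γ a₁ : ℝ) (hγ : 0 < γ) (ha₁ : 0 < a₁)
    (I : Fin n → ℝ → ℝ) (b b' : Fin n → ℝ → ℝ) (w : Fin n → ℝ → ℝ)
    (hbdef : ∀ i t, b i t = I i t - γ / n)
    (hder : ∀ i, ∀ t : ℝ, HasDerivAt (b i) (b' i t) t)
    (hcont : ∀ i, Continuous (b' i))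
    (hcl : ∀ i, ∀ t : ℝ, 0 ≤ t → b' i t + a₁ * b i t ≥ w i t)
    (hw : ∀ i, ∀ t : ℝ, 0 ≤ t → w i t ≤ 0)
    (hinit : ∀ i, 0 ≤ b i 0)
    (J : ℝ → ℝ) (hJ : ∀ t : ℝ, HasDerivAt J (-(∑ i : Fin n, I i t)) t) :
    (∀ i, ∀ c : ℝ, (∀ t : ℝ, 0 ≤ t → w i t ≥ -(a₁ * c)) →
        ∀ t : ℝ, 0 ≤ t → b i t ≥ (b i 0 + c) * Real.exp (-a₁ * t) - c) ∧
      ((∀ i, ∀ t : ℝ, 0 ≤ t → w i t = 0) →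
        ∀ t : ℝ, 0 ≤ t → (∀ i, I i t ≥ γ / n) ∧ -(∑ i : Fin n, I i t) ≤ -γ) :=
  stmt18_general n hn γ a₁ I b b' w hbdef hder hcl hinit
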